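/- arXiv:2408.12683 — 2 statements merged into one kernel-verified Lean document; each statement's English description precedes it below -/
import Mathlib

section
/- Let (Ω, F, P) be a probability space with a filtration F_0 ⊆ F_1 ⊆ … ⊆ F_n of sub-σ-algebras where F_0 is the trivial σ-algebra, and let Y be an integrable, F_n-measurable real random variable. For i = 1, …, n set D_i = E[Y | F_i] − E[Y | F_{i−1}]. Suppose there are constants c_1, …, c_n > 0 with |D_i| ≤ c_i almost surely, and let V > 0 satisfy V ≥ Σ_{i=1}^n ess sup E[D_i² | F_{i−1}]. Then for every ε with 0 < ε ≤ 2V / max_i c_i, one has P(|Y − E[Y]| > ε) ≤ 2 exp(−ε² / (4V)). -/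
open MeasureTheory ProbabilityTheory Real Finset

/-!
The increments `D i` of the Doob martingale `E[Y | F i]` are martingale differences. For
`|t| * c i ≤ 1` the inequality `exp x ≤ 1 + x + x ^ 2` on `[-1, 1]` gives
`E[exp (t D i) | F (i - 1)] ≤ 1 + t ^ 2 E[D i ^ 2 | F (i - 1)] ≤ exp (t ^ 2 v i)`, where `v i`
is the essential supremum of `E[D i ^ 2 | F (i - 1)]`. Peeling off one factor at a time by the
tower property bounds the moment generating function of
`Y - E[Y] = ∑ D i` by `exp (t ^ 2 V)`. The Chernoff bound at `t = ε / (2 V)`, admissible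
because `ε ≤ 2 V / max c i`, bounds each tail by `exp (-ε ^ 2 / (4 V))`.
-/

lemma Real.exp_le_one_add_add_sq {x : ℝ} (hx : |x| ≤ 1) : exp x ≤ 1 + x + x ^ 2 := by
  linarith [(abs_le.mp (abs_exp_sub_one_sub_id_le hx)).2]

lemma Real.exp_mul_le_exp_abs_mul {t x c : ℝ} (hx : |x| ≤ c) : exp (t * x) ≤ exp (|t| * c) := by
  refine exp_le_exp.mpr ?_
  calc t * x ≤ |t| * |x| := by rw [← abs_mul]; exact le_abs_self _
    _ ≤ |t| * c := by gcongr

lemma Finset.sum_Icc_one_sub_pred {M : Type*} [AddCommGroup M] (f : ℕ → M) (n : ℕ) :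
    ∑ i ∈ Icc 1 n, (f i - f (i - 1)) = f n - f 0 := by
  induction n with
  | zero => simp
  | succ k ih => rw [sum_Icc_succ_top (by omega), ih, Nat.add_sub_cancel]; abel

lemma Finset.div_mul_le_one_of_le_div_sup' {ι : Type*} {s : Finset ι} (hs : s.Nonempty)
    {c : ι → ℝ} {ε A : ℝ} (hε : 0 ≤ ε) (hA : 0 < A) (h : ε ≤ A / s.sup' hs c) {i : ι}
    (hi : i ∈ s) : ε / A * c i ≤ 1 := by
  rcases le_or_gt (s.sup' hs c) 0 with h_nonpos | h_pos
  · nlinarith [le_sup' c hi, div_nonneg hε hA.le]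
  · calc ε / A * c i ≤ ε / A * s.sup' hs c := by gcongr; exact le_sup' c hi
      _ ≤ 1 := by
        rw [le_div_iff₀ h_pos] at h
        rwa [div_mul_eq_mul_div, div_le_one hA]

namespace MeasureTheory

variable {Ω : Type*} {m m0 : MeasurableSpace Ω} {P : Measure Ω}

lemma integrable_sq_of_ae_abs_le [IsFiniteMeasure P] {X : Ω → ℝ} {c : ℝ}
    (hX : AEStronglyMeasurable X P) (hX_bdd : ∀ᵐ ω ∂P, |X ω| ≤ c) :
    Integrable (fun ω => X ω ^ 2) P :=
  Integrable.of_bound (hX.pow 2) (c ^ 2) <| by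
    filter_upwards [hX_bdd] with ω h
    rw [norm_pow, Real.norm_eq_abs, sq_abs]
    exact sq_le_sq' (abs_le.mp h).1 (abs_le.mp h).2

lemma integrable_exp_mul_of_ae_abs_le [IsFiniteMeasure P] {X : Ω → ℝ} {c : ℝ}
    (hX : AEStronglyMeasurable X P) (hX_bdd : ∀ᵐ ω ∂P, |X ω| ≤ c) (t : ℝ) :
    Integrable (fun ω => exp (t * X ω)) P :=
  Integrable.of_bound (continuous_exp.comp_aestronglyMeasurable (hX.const_mul t))
    (exp (|t| * c)) <| by
      filter_upwards [hX_bdd] with ω h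
      rw [Real.norm_eq_abs, abs_exp]
      exact exp_mul_le_exp_abs_mul h

lemma condExp_condExp_sub_condExp_ae_eq_zero [IsFiniteMeasure P] {m₁ m₂ : MeasurableSpace Ω}
    (h₁₂ : m₁ ≤ m₂) (h₂ : m₂ ≤ m0) (Y : Ω → ℝ) :
    P[P[Y|m₂] - P[Y|m₁]|m₁] =ᵐ[P] 0 := by
  filter_upwards [condExp_sub (m := m₁) (integrable_condExp (μ := P) (m := m₂) (f := Y))
      integrable_condExp,
    condExp_condExp_of_le (μ := P) (f := Y) h₁₂ h₂] with ω h_sub h_tower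
  rw [h_sub, Pi.sub_apply, h_tower, condExp_of_stronglyMeasurable (h₁₂.trans h₂)
    stronglyMeasurable_condExp integrable_condExp, Pi.zero_apply, sub_self]

lemma sum_Icc_condExp_sub_condExp [IsProbabilityMeasure P] {F : ℕ → MeasurableSpace Ω} {n : ℕ}
    (hF_le : F n ≤ m0) (hF0 : F 0 = ⊥) {Y : Ω → ℝ} (hY_int : Integrable Y P)
    (hY_meas : StronglyMeasurable[F n] Y) :
    ∑ i ∈ Icc 1 n, (P[Y|F i] - P[Y|F (i - 1)]) = fun ω => Y ω - ∫ ω, Y ω ∂P := by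
  rw [sum_Icc_one_sub_pred (fun i => P[Y|F i]) n,
    condExp_of_stronglyMeasurable hF_le hY_meas hY_int, hF0, condExp_bot]
  rfl

lemma condExp_sq_le_essSup_of_ae_abs_le [IsFiniteMeasure P] (hm : m ≤ m0) {X : Ω → ℝ} {c : ℝ}
    (hX : AEStronglyMeasurable X P) (hX_bdd : ∀ᵐ ω ∂P, |X ω| ≤ c) :
    P[fun ω => X ω ^ 2|m] ≤ᵐ[P] fun _ => essSup (P[fun ω => X ω ^ 2|m]) P := by
  refine ae_le_essSup ⟨c ^ 2, Filter.eventually_map.mpr ?_⟩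
  have h_sq : (fun ω => X ω ^ 2) ≤ᵐ[P] fun _ => c ^ 2 := by
    filter_upwards [hX_bdd] with ω h
    exact sq_le_sq' (abs_le.mp h).1 (abs_le.mp h).2
  have := condExp_mono (m := m) (integrable_sq_of_ae_abs_le hX hX_bdd) (integrable_const _) h_sq
  rwa [condExp_const hm] at this

lemma condExp_exp_mul_le_of_condExp_eq_zero [IsFiniteMeasure P] (hm : m ≤ m0) {D : Ω → ℝ}
    {c t v : ℝ} (hD : AEStronglyMeasurable D P) (hD_bdd : ∀ᵐ ω ∂P, |D ω| ≤ c)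
    (hD_condExp : P[D|m] =ᵐ[P] 0) (hv : P[fun ω => D ω ^ 2|m] ≤ᵐ[P] fun _ => v)
    (ht : |t| * c ≤ 1) :
    P[fun ω => exp (t * D ω)|m] ≤ᵐ[P] fun _ => exp (t ^ 2 * v) := by
  have hD_int : Integrable D P :=
    Integrable.of_bound hD c (by simpa only [Real.norm_eq_abs] using hD_bdd)
  have hD_sq_int := integrable_sq_of_ae_abs_le hD hD_bdd
  have h_quad : (fun ω => exp (t * D ω)) ≤ᵐ[P]
      (fun _ => (1 : ℝ)) + t • D + t ^ 2 • fun ω => D ω ^ 2 := by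
    filter_upwards [hD_bdd] with ω h
    have h_tD : |t * D ω| ≤ 1 := by
      rw [abs_mul]; exact (mul_le_mul_of_nonneg_left h (abs_nonneg t)).trans ht
    simpa only [Pi.add_apply, Pi.smul_apply, smul_eq_mul, mul_pow] using
      exp_le_one_add_add_sq h_tD
  have h_quad_int : Integrable ((fun _ => (1 : ℝ)) + t • D + t ^ 2 • fun ω => D ω ^ 2) P :=
    ((integrable_const 1).add (hD_int.smul t)).add (hD_sq_int.smul (t ^ 2))
  have h_linear : P[(fun _ => (1 : ℝ)) + t • D + t ^ 2 • fun ω => D ω ^ 2|m] =ᵐ[P]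
      (fun _ => (1 : ℝ)) + t • P[D|m] + t ^ 2 • P[fun ω => D ω ^ 2|m] := by
    filter_upwards [condExp_add ((integrable_const 1).add (hD_int.smul t))
        (hD_sq_int.smul (t ^ 2)) m,
      condExp_add (integrable_const 1) (hD_int.smul t) m, condExp_smul (μ := P) t D m,
      condExp_smul (μ := P) (t ^ 2) (fun ω => D ω ^ 2) m] with ω h₁ h₂ h₃ h₄
    simp only [Pi.add_apply, Pi.smul_apply] at h₁ h₂ h₃ h₄ ⊢
    rw [h₁, h₂, h₃, h₄, condExp_const hm]
  filter_upwards [condExp_mono (m := m) (integrable_exp_mul_of_ae_abs_le hD hD_bdd t)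
      h_quad_int h_quad, h_linear, hD_condExp, hv] with ω h_mono h_eq h_zero h_var
  simp only [Pi.add_apply, Pi.smul_apply, Pi.zero_apply, smul_eq_mul] at h_mono h_eq h_zero
  rw [h_eq, h_zero] at h_mono
  calc _ ≤ 1 + t * 0 + t ^ 2 * P[fun ω => D ω ^ 2|m] ω := h_mono
    _ ≤ t ^ 2 * v + 1 := by nlinarith [sq_nonneg t]
    _ ≤ exp (t ^ 2 * v) := add_one_le_exp _

lemma integral_mul_le_mul_integral_of_condExp_le [IsFiniteMeasure P] (hm : m ≤ m0)
    {f g : Ω → ℝ} {C a : ℝ} (hf : StronglyMeasurable[m] f) (hf_nonneg : 0 ≤ f)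
    (hf_bdd : ∀ᵐ ω ∂P, |f ω| ≤ C) (hg : Integrable g P) (hg_le : P[g|m] ≤ᵐ[P] fun _ => a) :
    ∫ ω, f ω * g ω ∂P ≤ a * ∫ ω, f ω ∂P := by
  have hf_ae : AEStronglyMeasurable f P := (hf.mono hm).aestronglyMeasurable
  have hf_norm : ∀ᵐ ω ∂P, ‖f ω‖ ≤ C := by simpa only [Real.norm_eq_abs] using hf_bdd
  calc ∫ ω, f ω * g ω ∂P = ∫ ω, P[f * g|m] ω ∂P := (integral_condExp hm).symm
    _ = ∫ ω, f ω * P[g|m] ω ∂P :=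
      integral_congr_ae (condExp_mul_of_stronglyMeasurable_left hf (hg.bdd_mul hf_ae hf_norm) hg)
    _ ≤ ∫ ω, f ω * a ∂P := by
      refine integral_mono_ae (integrable_condExp.bdd_mul hf_ae hf_norm)
        ((Integrable.of_bound hf_ae C hf_norm).mul_const a) ?_
      filter_upwards [hg_le] with ω h
      exact mul_le_mul_of_nonneg_left h (hf_nonneg ω)
    _ = a * ∫ ω, f ω ∂P := by rw [integral_mul_const, mul_comm]

lemma integral_prod_le_prod_of_condExp_le [IsProbabilityMeasure P] {F : ℕ → MeasurableSpace Ω}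
    (hF_le : ∀ i, F i ≤ m0) (hF_mono : Monotone F) {X : ℕ → Ω → ℝ} {C a : ℕ → ℝ} (n : ℕ)
    (hX : ∀ i ∈ Icc 1 n, StronglyMeasurable[F i] (X i)) (hX_nonneg : ∀ i ∈ Icc 1 n, 0 ≤ X i)
    (hX_bdd : ∀ i ∈ Icc 1 n, ∀ᵐ ω ∂P, |X i ω| ≤ C i)
    (hX_condExp : ∀ i ∈ Icc 1 n, P[X i|F (i - 1)] ≤ᵐ[P] fun _ => a i) :
    ∫ ω, ∏ i ∈ Icc 1 n, X i ω ∂P ≤ ∏ i ∈ Icc 1 n, a i := by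
  induction n with
  | zero => simp
  | succ k ih =>
    have h_sub : Icc 1 k ⊆ Icc 1 (k + 1) := Icc_subset_Icc_right k.le_succ
    have h_top : k + 1 ∈ Icc 1 (k + 1) := right_mem_Icc.mpr (by omega)
    have ha_nonneg : 0 ≤ a (k + 1) := by
      obtain ⟨ω, h_nonneg, h_le⟩ := ((condExp_nonneg (m := F k) (μ := P)
        (Filter.Eventually.of_forall (hX_nonneg _ h_top))).and (hX_condExp _ h_top)).exists
      exact h_nonneg.trans h_le
    have h_prefix_meas : StronglyMeasurable[F k] fun ω => ∏ i ∈ Icc 1 k, X i ω :=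
      stronglyMeasurable_fun_prod _ fun i hi =>
        (hX i (h_sub hi)).mono (hF_mono (mem_Icc.mp hi).2)
    have h_prefix_bdd : ∀ᵐ ω ∂P, |∏ i ∈ Icc 1 k, X i ω| ≤ ∏ i ∈ Icc 1 k, C i := by
      filter_upwards [(Filter.eventually_all_finset _).mpr fun i hi => hX_bdd i (h_sub hi)]
        with ω h
      exact (abs_prod _ _).trans_le (prod_le_prod (fun i _ => abs_nonneg _) h)
    simp only [prod_Icc_succ_top (by omega : 1 ≤ k + 1)]
    calc ∫ ω, (∏ i ∈ Icc 1 k, X i ω) * X (k + 1) ω ∂P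
        ≤ a (k + 1) * ∫ ω, ∏ i ∈ Icc 1 k, X i ω ∂P :=
          integral_mul_le_mul_integral_of_condExp_le (hF_le k) h_prefix_meas
            (fun ω => prod_nonneg fun i hi => hX_nonneg i (h_sub hi) ω) h_prefix_bdd
            (Integrable.of_bound ((hX _ h_top).mono (hF_le _)).aestronglyMeasurable (C (k + 1))
              (by simpa only [Real.norm_eq_abs] using hX_bdd _ h_top)) (hX_condExp _ h_top)
      _ ≤ a (k + 1) * ∏ i ∈ Icc 1 k, a i :=
          mul_le_mul_of_nonneg_left (ih (fun i hi => hX i (h_sub hi))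
            (fun i hi => hX_nonneg i (h_sub hi)) (fun i hi => hX_bdd i (h_sub hi))
            (fun i hi => hX_condExp i (h_sub hi))) ha_nonneg
      _ = (∏ i ∈ Icc 1 k, a i) * a (k + 1) := mul_comm _ _

end MeasureTheory

namespace ProbabilityTheory

variable {Ω : Type*} {m0 : MeasurableSpace Ω} {P : Measure Ω}

lemma mgf_sum_le_of_condExp_eq_zero [IsProbabilityMeasure P] {F : ℕ → MeasurableSpace Ω}
    (hF_le : ∀ i, F i ≤ m0) (hF_mono : Monotone F) {D : ℕ → Ω → ℝ} {c v : ℕ → ℝ} {t : ℝ}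
    (n : ℕ) (hD : ∀ i ∈ Icc 1 n, StronglyMeasurable[F i] (D i))
    (hD_bdd : ∀ i ∈ Icc 1 n, ∀ᵐ ω ∂P, |D i ω| ≤ c i)
    (hD_condExp : ∀ i ∈ Icc 1 n, P[D i|F (i - 1)] =ᵐ[P] 0)
    (hv : ∀ i ∈ Icc 1 n, P[fun ω => D i ω ^ 2|F (i - 1)] ≤ᵐ[P] fun _ => v i)
    (ht : ∀ i ∈ Icc 1 n, |t| * c i ≤ 1) :
    mgf (fun ω => ∑ i ∈ Icc 1 n, D i ω) P t ≤ exp (t ^ 2 * ∑ i ∈ Icc 1 n, v i) := by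
  have h_prod := integral_prod_le_prod_of_condExp_le (P := P) hF_le hF_mono
    (X := fun i ω => exp (t * D i ω)) (C := fun i => exp (|t| * c i)) n
    (fun i hi => continuous_exp.comp_stronglyMeasurable ((hD i hi).const_mul t))
    (fun _ _ ω => (exp_pos _).le)
    (fun i hi => by
      filter_upwards [hD_bdd i hi] with ω h
      rw [abs_exp]
      exact exp_mul_le_exp_abs_mul h)
    (fun i hi => condExp_exp_mul_le_of_condExp_eq_zero (hF_le _)
      ((hD i hi).mono (hF_le i)).aestronglyMeasurable (hD_bdd i hi) (hD_condExp i hi) (hv i hi)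
      (ht i hi))
  simpa only [mgf, mul_sum, exp_sum] using h_prod

lemma measureReal_abs_gt_le_of_mgf_le [IsFiniteMeasure P] {X : Ω → ℝ} {t b ε : ℝ} (ht : 0 ≤ t)
    (h_int : ∀ s, |s| = t → Integrable (fun ω => exp (s * X ω)) P)
    (h_mgf : ∀ s, |s| = t → mgf X P s ≤ b) :
    P.real {ω | ε < |X ω|} ≤ 2 * (exp (-t * ε) * b) := by
  have h_abs_neg : |-t| = t := by rw [abs_neg, abs_of_nonneg ht]
  have h_upper := measure_ge_le_exp_mul_mgf ε ht (h_int t (abs_of_nonneg ht))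
  have h_lower := measure_le_le_exp_mul_mgf (-ε) (neg_nonpos.mpr ht) (h_int (-t) h_abs_neg)
  rw [show -(-t) * -ε = -t * ε by ring] at h_lower
  calc P.real {ω | ε < |X ω|} ≤ P.real ({ω | ε ≤ X ω} ∪ {ω | X ω ≤ -ε}) :=
        measureReal_mono fun ω (h : ε < |X ω|) => by
          rcases lt_abs.mp h with h | h
          exacts [Or.inl h.le, Or.inr (show X ω ≤ -ε by linarith)]
    _ ≤ P.real {ω | ε ≤ X ω} + P.real {ω | X ω ≤ -ε} := measureReal_union_le _ _
    _ ≤ exp (-t * ε) * b + exp (-t * ε) * b := by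
        gcongr
        exacts [h_upper.trans (by gcongr; exact h_mgf t (abs_of_nonneg ht)),
          h_lower.trans (by gcongr; exact h_mgf (-t) h_abs_neg)]
    _ = 2 * (exp (-t * ε) * b) := by ring

end ProbabilityTheory

theorem method_of_bounded_variances_general
    {Ω : Type*} [m0 : MeasurableSpace Ω] (P : Measure Ω) [IsProbabilityMeasure P]
    (n : ℕ) (hn : 1 ≤ n)
    (F : ℕ → MeasurableSpace Ω)
    (hF_le : ∀ i, F i ≤ m0) (hF_mono : Monotone F) (hF0 : F 0 = ⊥)
    (Y : Ω → ℝ) (hY_int : Integrable Y P) (hY_meas : StronglyMeasurable[F n] Y)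
    (D : ℕ → Ω → ℝ)
    (hD : ∀ i ∈ Finset.Icc 1 n, D i = P[Y|F i] - P[Y|F (i - 1)])
    (c : ℕ → ℝ)
    (hD_bdd : ∀ i ∈ Finset.Icc 1 n, ∀ᵐ ω ∂P, |D i ω| ≤ c i)
    (V : ℝ) (hV_pos : 0 < V)
    (hV : (∑ i ∈ Finset.Icc 1 n,
      essSup (P[(fun ω => (D i ω) ^ 2)|F (i - 1)]) P) ≤ V)
    (ε : ℝ) (hε_pos : 0 < ε)
    (hε_le : ε ≤ 2 * V / ((Finset.Icc 1 n).sup' (Finset.nonempty_Icc.mpr hn) c)) :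
    (P {ω | |Y ω - ∫ ω, Y ω ∂P| > ε}).toReal ≤ 2 * Real.exp (-ε ^ 2 / (4 * V)) := by
  set t := ε / (2 * V) with ht_def
  have ht_pos : 0 < t := by positivity
  have htc : ∀ i ∈ Icc 1 n, t * c i ≤ 1 := fun i hi =>
    div_mul_le_one_of_le_div_sup' _ hε_pos.le (by positivity) hε_le hi
  have hD_meas : ∀ i ∈ Icc 1 n, StronglyMeasurable[F i] (D i) := fun i hi => by
    rw [hD i hi]
    exact stronglyMeasurable_condExp.sub (stronglyMeasurable_condExp.mono (hF_mono (i.sub_le 1)))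
  have hD_ae : ∀ i ∈ Icc 1 n, AEStronglyMeasurable (D i) P := fun i hi =>
    ((hD_meas i hi).mono (hF_le i)).aestronglyMeasurable
  have hD_condExp : ∀ i ∈ Icc 1 n, P[D i|F (i - 1)] =ᵐ[P] 0 := fun i hi => by
    rw [hD i hi]
    exact condExp_condExp_sub_condExp_ae_eq_zero (hF_mono (i.sub_le 1)) (hF_le i) Y
  have h_telescope : ∀ ω, ∑ i ∈ Icc 1 n, D i ω = Y ω - ∫ ω, Y ω ∂P := by
    intro ω
    simpa only [Finset.sum_apply] using
      congrFun ((sum_congr rfl hD).trans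
        (sum_Icc_condExp_sub_condExp (hF_le n) hF0 hY_int hY_meas)) ω
  have hS_bdd : ∀ᵐ ω ∂P, |∑ i ∈ Icc 1 n, D i ω| ≤ ∑ i ∈ Icc 1 n, c i := by
    filter_upwards [(Filter.eventually_all_finset _).mpr hD_bdd] with ω h
    exact (abs_sum_le_sum_abs _ _).trans (sum_le_sum h)
  have h_tail := measureReal_abs_gt_le_of_mgf_le (b := exp (t ^ 2 * V)) (ε := ε) ht_pos.le
    (fun s _ => integrable_exp_mul_of_ae_abs_le (aestronglyMeasurable_fun_sum _ hD_ae) hS_bdd s)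
    (fun s hs => (mgf_sum_le_of_condExp_eq_zero hF_le hF_mono n hD_meas hD_bdd hD_condExp
      (fun i hi => condExp_sq_le_essSup_of_ae_abs_le (hF_le _) (hD_ae i hi) (hD_bdd i hi))
      (fun i hi => hs ▸ htc i hi)).trans (exp_le_exp.mpr (by rw [← sq_abs, hs]; gcongr)))
  simp only [h_telescope] at h_tail
  rw [← exp_add, show -t * ε + t ^ 2 * V = -ε ^ 2 / (4 * V) by
    rw [ht_def]; field_simp; ring] at h_tail
  simpa only [gt_iff_lt, measureReal_def] using h_tail

/-- Method of bounded variances (martingale concentration inequality). -/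
theorem method_of_bounded_variances
    {Ω : Type*} [m0 : MeasurableSpace Ω] (P : Measure Ω) [IsProbabilityMeasure P]
    (n : ℕ) (hn : 1 ≤ n)
    (F : ℕ → MeasurableSpace Ω)
    (hF_le : ∀ i, F i ≤ m0) (hF_mono : Monotone F) (hF0 : F 0 = ⊥)
    (Y : Ω → ℝ) (hY_int : Integrable Y P) (hY_meas : StronglyMeasurable[F n] Y)
    (D : ℕ → Ω → ℝ)
    (hD : ∀ i ∈ Finset.Icc 1 n, D i = P[Y|F i] - P[Y|F (i - 1)])
    (c : ℕ → ℝ) (hc_pos : ∀ i ∈ Finset.Icc 1 n, 0 < c i)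
    (hD_bdd : ∀ i ∈ Finset.Icc 1 n, ∀ᵐ ω ∂P, |D i ω| ≤ c i)
    (V : ℝ) (hV_pos : 0 < V)
    (hV : (∑ i ∈ Finset.Icc 1 n,
      essSup (P[(fun ω => (D i ω) ^ 2)|F (i - 1)]) P) ≤ V)
    (ε : ℝ) (hε_pos : 0 < ε)
    (hε_le : ε ≤ 2 * V / ((Finset.Icc 1 n).sup' (Finset.nonempty_Icc.mpr hn) c)) :
    (P {ω | |Y ω - ∫ ω, Y ω ∂P| > ε}).toReal ≤ 2 * Real.exp (-ε ^ 2 / (4 * V)) :=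
  method_of_bounded_variances_general (m0 := m0) P n hn F hF_le hF_mono hF0 Y hY_int hY_meas D hD c
    hD_bdd V hV_pos hV ε hε_pos hε_le
end

section
/- Fix d ≥ 1, a finite index set K, weights p : K → ℝ with p_k > 0 for all k ∈ K, and unitary d×d complex matrices U_k for k ∈ K. Define the linear map Γ on d×d complex matrices by Γ(O) = Σ_{k∈K} p_k Σ_{j=1}^d ⟨j| U_k† O U_k |j⟩ · (U_k |j⟩⟨j| U_k†). If the family of matrices { U_k |j⟩⟨j| U_k† : k ∈ K, j ∈ {1,…,d} } spans the complex vector space of all d×d complex matrices, then Γ is bijective. -/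
/-!
Since `⟨j| U† O U |j⟩ = tr (Aᴴ O)` for the Hermitian snapshot `A = U |j⟩⟨j| U†`, the map `Γ` is the
frame operator `O ↦ ∑ wᵢ ⟨Aᵢ, O⟩ Aᵢ` of the snapshots for the Hilbert–Schmidt inner product
`⟨A, B⟩ = tr (Aᴴ B)`. Hence `⟨O, Γ O⟩ = ∑ wᵢ |⟨Aᵢ, O⟩|²`, so with positive weights `Γ O = 0` makes
`O` orthogonal to every snapshot, hence to their span, which is everything: `O = 0`. An injective
endomorphism of a finite-dimensional space is bijective.
-/

open Matrix
open scoped ComplexOrder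

namespace Matrix

variable {n ι 𝕜 : Type*} [Fintype n] [RCLike 𝕜]

theorem trace_mul_single_one_mul_mul [DecidableEq n] {R : Type*} [CommSemiring R]
    (U V O : Matrix n n R) (i j : n) : trace (U * single i j 1 * V * O) = (V * O * U) j i := by
  rw [Matrix.mul_assoc, Matrix.mul_assoc, trace_mul_comm, Matrix.mul_assoc,
    trace_single_mul, one_smul]

theorem trace_conjTranspose_mul_eq_zero_of_sum_smul_eq_zero [Fintype ι] {A : ι → Matrix n n 𝕜}
    {w : ι → 𝕜} (hw : ∀ i, 0 < w i) {O : Matrix n n 𝕜}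
    (hO : ∑ i, (w i * trace ((A i)ᴴ * O)) • A i = 0) (i : ι) :
    trace (Oᴴ * A i) = 0 := by
  have hstar : ∀ i, trace (Oᴴ * A i) = star (trace ((A i)ᴴ * O)) := fun i => by
    rw [← trace_conjTranspose, conjTranspose_mul, conjTranspose_conjTranspose]
  have hsum : ∑ i, w i * (trace ((A i)ᴴ * O) * star (trace ((A i)ᴴ * O))) = 0 := by
    have h := congrArg (fun M => trace (Oᴴ * M)) hO
    simpa only [Matrix.mul_sum, Matrix.mul_smul, trace_sum, trace_smul, smul_eq_mul,
      Matrix.mul_zero, trace_zero, hstar, mul_assoc] using h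
  have hterm := (Finset.sum_eq_zero_iff_of_nonneg fun i _ =>
    mul_nonneg (hw i).le (mul_star_self_nonneg _)).mp hsum i (Finset.mem_univ i)
  rw [hstar, star_eq_zero]
  simpa only [mul_eq_zero, (hw i).ne', star_eq_zero, or_self, false_or] using hterm

theorem eq_zero_of_trace_conjTranspose_mul_eq_zero {A : ι → Matrix n n 𝕜}
    (hA : Submodule.span 𝕜 (Set.range A) = ⊤) {O : Matrix n n 𝕜}
    (hO : ∀ i, trace (Oᴴ * A i) = 0) : O = 0 := by
  let φ : Matrix n n 𝕜 →ₗ[𝕜] 𝕜 := traceLinearMap n 𝕜 𝕜 ∘ₗ LinearMap.mulLeft 𝕜 Oᴴ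
  have hφ : Submodule.span 𝕜 (Set.range A) ≤ LinearMap.ker φ :=
    Submodule.span_le.mpr (Set.range_subset_iff.mpr hO)
  rw [hA] at hφ
  exact trace_conjTranspose_mul_self_eq_zero_iff.mp (hφ Submodule.mem_top)

end Matrix

theorem shadow_channel_bijective_general
    (d : ℕ) {K : Type*} [Fintype K]
    (p : K → ℝ) (hp_pos : ∀ k, 0 < p k)
    (U : K → Matrix (Fin d) (Fin d) ℂ)
    (Γ : Matrix (Fin d) (Fin d) ℂ →ₗ[ℂ] Matrix (Fin d) (Fin d) ℂ)
    (hΓ : ∀ O, Γ O = ∑ k, ∑ j, ((p k : ℂ) * (((U k)ᴴ * O * U k) j j)) •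
        (U k * Matrix.single j j 1 * (U k)ᴴ))
    (hspan : Submodule.span ℂ
        {A : Matrix (Fin d) (Fin d) ℂ |
          ∃ k j, A = U k * Matrix.single j j 1 * (U k)ᴴ} = ⊤) :
    Function.Bijective Γ := by
  set A : K × Fin d → Matrix (Fin d) (Fin d) ℂ :=
    fun kj => U kj.1 * single kj.2 kj.2 1 * (U kj.1)ᴴ
  have hA : Submodule.span ℂ (Set.range A) = ⊤ := by
    rw [← hspan]
    congr 1
    ext B
    simp [A, eq_comm]
  have hΓA : ∀ O, Γ O = ∑ kj, ((p kj.1 : ℂ) * trace ((A kj)ᴴ * O)) • A kj := fun O => by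
    simp only [hΓ, Fintype.sum_prod_type, A, conjTranspose_mul, conjTranspose_conjTranspose,
      conjTranspose_single, star_one, ← Matrix.mul_assoc, trace_mul_single_one_mul_mul]
  have hinj : Function.Injective Γ := by
    rw [← LinearMap.ker_eq_bot, LinearMap.ker_eq_bot']
    intro O hO
    rw [hΓA] at hO
    refine eq_zero_of_trace_conjTranspose_mul_eq_zero hA
      (trace_conjTranspose_mul_eq_zero_of_sum_smul_eq_zero ?_ hO)
    exact fun kj => Complex.zero_lt_real.mpr (hp_pos kj.1)
  exact ⟨hinj, LinearMap.injective_iff_surjective.mp hinj⟩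

/-- If the ensemble of unitaries is tomographically complete (the snapshot matrices span
all d×d matrices) and the weights are positive, then the shadow channel Γ is bijective. -/
theorem shadow_channel_bijective
    (d : ℕ) (hd : 1 ≤ d) {K : Type*} [Fintype K]
    (p : K → ℝ) (hp_pos : ∀ k, 0 < p k)
    (U : K → Matrix (Fin d) (Fin d) ℂ)
    (hU : ∀ k, U k ∈ Matrix.unitaryGroup (Fin d) ℂ)
    (Γ : Matrix (Fin d) (Fin d) ℂ →ₗ[ℂ] Matrix (Fin d) (Fin d) ℂ)
    (hΓ : ∀ O, Γ O = ∑ k, ∑ j, ((p k : ℂ) * (((U k)ᴴ * O * U k) j j)) •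
        (U k * Matrix.single j j 1 * (U k)ᴴ))
    (hspan : Submodule.span ℂ
        {A : Matrix (Fin d) (Fin d) ℂ |
          ∃ k j, A = U k * Matrix.single j j 1 * (U k)ᴴ} = ⊤) :
    Function.Bijective Γ :=
  shadow_channel_bijective_general d p hp_pos U Γ hΓ hspan
end
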